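/- Let n ≥ 3 and m ≥ 1 be integers and let λ > 0 be a real number. Suppose ψ : ℝⁿ → ℝᵐ is a C² map that is ℤⁿ-periodic (that is, ψ(x + k) = ψ(x) for every x ∈ ℝⁿ and every k ∈ ℤⁿ) and satisfies the Einstein–Dirac-type equation −Δψ(x) + (λ/(4(n−2)))‖ψ(x)‖² ψ(x) = λ² ψ(x) for every x ∈ ℝⁿ, where Δ acts componentwise. Then ‖ψ(x)‖² ≤ 4(n−2)λ for every x ∈ ℝⁿ. -/

import Mathlib

/-!
Periodicity gives a point `x₀` where `‖ψ‖²` is maximal. There every second directional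
derivative of `‖ψ‖²` is nonpositive, so `0 ≥ Δ‖ψ‖² = 2⟪ψ, Δψ⟫ + 2 ∑ᵢ ‖∂ᵢψ‖² ≥ 2⟪ψ, Δψ⟫`,
while the equation gives `⟪ψ, Δψ⟫ = (λ‖ψ‖²/(4(n−2)) − λ²) ‖ψ‖²`. Hence
`‖ψ‖² ≤ ‖ψ(x₀)‖² ≤ 4(n−2)λ` everywhere.
-/

/-- The componentwise Euclidean Laplacian `Δψ(x) = ∑ i ∂²ψ/∂xᵢ²(x)`. -/
noncomputable def euclideanLaplacian {n : ℕ} {F : Type*} [NormedAddCommGroup F]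
    [NormedSpace ℝ F] (ψ : EuclideanSpace ℝ (Fin n) → F) (x : EuclideanSpace ℝ (Fin n)) : F :=
  ∑ i : Fin n,
    fderiv ℝ (fun y => fderiv ℝ ψ y (EuclideanSpace.single i 1)) x (EuclideanSpace.single i 1)

open scoped RealInnerProductSpace Topology

theorem exists_forall_le_of_intPeriodic {n : ℕ} {α : Type*} [LinearOrder α]
    [TopologicalSpace α] [ClosedIciTopology α] {f : EuclideanSpace ℝ (Fin n) → α}
    (hf : Continuous f)
    (hper : ∀ (x : EuclideanSpace ℝ (Fin n)) (k : Fin n → ℤ),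
      f (x + (WithLp.equiv 2 (Fin n → ℝ)).symm (fun i => (k i : ℝ))) = f x) :
    ∃ x₀, ∀ x, f x ≤ f x₀ := by
  set e := (WithLp.equiv 2 (Fin n → ℝ)).symm
  set K := e '' Set.univ.pi fun _ => Set.Icc (0 : ℝ) 1
  have hK : IsCompact K :=
    (isCompact_univ_pi fun _ => isCompact_Icc).image (PiLp.continuous_toLp 2 _)
  obtain ⟨x₀, -, hmax⟩ :=
    hK.exists_isMaxOn ⟨e 0, 0, fun _ _ => ⟨le_rfl, zero_le_one⟩, rfl⟩ hf.continuousOn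
  refine ⟨x₀, fun x => ?_⟩
  have hfract : e (fun i => Int.fract (x i)) ∈ K :=
    ⟨_, fun i _ => ⟨Int.fract_nonneg _, (Int.fract_lt_one _).le⟩, rfl⟩
  have hx : e (fun i => Int.fract (x i)) + e (fun i => (⌊x i⌋ : ℝ)) = x := by
    ext i; simp [e]
  rw [← hx, hper]
  exact hmax hfract

theorem IsLocalMax.deriv_deriv_nonpos {f : ℝ → ℝ} {a : ℝ} (h : IsLocalMax f a)
    (hc : ContinuousAt f a) : deriv (deriv f) a ≤ 0 := by
  by_contra! hpos
  have hmin : IsLocalMin f a := isLocalMin_of_deriv_deriv_pos hpos h.deriv_eq_zero hc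
  have hconst : f =ᶠ[𝓝 a] fun _ => f a :=
    (hmin.and h).mono fun _ hx => le_antisymm hx.2 hx.1
  have hzero : deriv (deriv f) a = 0 := by
    rw [hconst.deriv.deriv_eq]
    simp
  exact hpos.ne' hzero

section SecondDirectionalDerivative

variable {E F : Type*} [NormedAddCommGroup E] [NormedSpace ℝ E]
  [NormedAddCommGroup F] [InnerProductSpace ℝ F]

theorem ContDiff.differentiable_fderiv_apply {G : Type*} [NormedAddCommGroup G]
    [NormedSpace ℝ G] {f : E → G} (hf : ContDiff ℝ 2 f) (v : E) :
    Differentiable ℝ (fun y => fderiv ℝ f y v) :=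
  ((hf.fderiv_right (m := 1) le_rfl).clm_apply contDiff_const).differentiable one_ne_zero

theorem IsLocalMax.fderiv_fderiv_apply_nonpos {u : E → ℝ} {x : E} (h : IsLocalMax u x)
    (hu : Differentiable ℝ u) (v : E) (hu' : DifferentiableAt ℝ (fun y => fderiv ℝ u y v) x) :
    fderiv ℝ (fun y => fderiv ℝ u y v) x v ≤ 0 := by
  have hline : ∀ t : ℝ, HasDerivAt (fun s : ℝ => x + s • v) v t := fun t => by
    simpa using ((hasDerivAt_id t).smul_const v).const_add x
  have hmax : IsLocalMax (fun t : ℝ => u (x + t • v)) 0 :=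
    IsLocalMax.comp_continuous (by simpa using h) (hline 0).continuousAt
  have hc : ContinuousAt (fun t : ℝ => u (x + t • v)) 0 :=
    hu.continuous.continuousAt.comp (hline 0).continuousAt
  have hfirst : deriv (fun t : ℝ => u (x + t • v)) = fun t => fderiv ℝ u (x + t • v) v :=
    funext fun t => ((hu _).hasFDerivAt.comp_hasDerivAt t (hline t)).deriv
  have hsecond : HasDerivAt (fun t : ℝ => fderiv ℝ u (x + t • v) v)
      (fderiv ℝ (fun y => fderiv ℝ u y v) x v) 0 :=
    hu'.hasFDerivAt.comp_hasDerivAt_of_eq 0 (hline 0) (by simp)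
  simpa [hfirst, hsecond.deriv] using hmax.deriv_deriv_nonpos hc

theorem fderiv_fderiv_norm_sq_apply {ψ : E → F} {x : E} (hψ : Differentiable ℝ ψ) (v : E)
    (hψ' : DifferentiableAt ℝ (fun y => fderiv ℝ ψ y v) x) :
    fderiv ℝ (fun y => fderiv ℝ (fun z => ‖ψ z‖ ^ 2) y v) x v
      = 2 * ⟪ψ x, fderiv ℝ (fun y => fderiv ℝ ψ y v) x v⟫ + 2 * ‖fderiv ℝ ψ x v‖ ^ 2 := by
  have hfirst : (fun y => fderiv ℝ (fun z => ‖ψ z‖ ^ 2) y v)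
      = fun y => 2 * ⟪ψ y, fderiv ℝ ψ y v⟫ := by
    funext y
    rw [(hψ y).hasFDerivAt.norm_sq.fderiv]
    simp
  rw [hfirst, fderiv_const_mul ((hψ x).inner ℝ hψ'), smul_apply,
    fderiv_inner_apply ℝ (hψ x) hψ', real_inner_self_eq_norm_sq, smul_eq_mul]
  ring

end SecondDirectionalDerivative

section Laplacian

variable {n : ℕ} {F : Type*} [NormedAddCommGroup F] [InnerProductSpace ℝ F]

theorem euclideanLaplacian_norm_sq {ψ : EuclideanSpace ℝ (Fin n) → F} (hψ : ContDiff ℝ 2 ψ)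
    (x : EuclideanSpace ℝ (Fin n)) :
    euclideanLaplacian (fun y => ‖ψ y‖ ^ 2) x
      = 2 * ⟪ψ x, euclideanLaplacian ψ x⟫
        + 2 * ∑ i, ‖fderiv ℝ ψ x (EuclideanSpace.single i 1)‖ ^ 2 := by
  simp only [euclideanLaplacian, inner_sum, Finset.mul_sum, ← Finset.sum_add_distrib,
    fderiv_fderiv_norm_sq_apply (hψ.differentiable two_ne_zero) _
      (hψ.differentiable_fderiv_apply _ _)]

theorem IsLocalMax.euclideanLaplacian_nonpos {u : EuclideanSpace ℝ (Fin n) → ℝ}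
    {x : EuclideanSpace ℝ (Fin n)} (h : IsLocalMax u x) (hu : ContDiff ℝ 2 u) :
    euclideanLaplacian u x ≤ 0 :=
  Finset.sum_nonpos fun _ _ => h.fderiv_fderiv_apply_nonpos (hu.differentiable two_ne_zero) _
    (hu.differentiable_fderiv_apply _ _)

theorem IsLocalMax.inner_euclideanLaplacian_nonpos {ψ : EuclideanSpace ℝ (Fin n) → F}
    {x : EuclideanSpace ℝ (Fin n)} (h : IsLocalMax (fun y => ‖ψ y‖ ^ 2) x)
    (hψ : ContDiff ℝ 2 ψ) : ⟪ψ x, euclideanLaplacian ψ x⟫ ≤ 0 := by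
  have hlap := h.euclideanLaplacian_nonpos (hψ.norm_sq ℝ)
  rw [euclideanLaplacian_norm_sq hψ] at hlap
  have hgrad : 0 ≤ ∑ i, ‖fderiv ℝ ψ x (EuclideanSpace.single i 1)‖ ^ 2 :=
    Finset.sum_nonneg fun _ _ => sq_nonneg _
  linarith

end Laplacian

theorem periodic_einstein_spinor_sup_bound_general
    (n m : ℕ) (hn : 3 ≤ n) (lam : ℝ) (hlam : 0 < lam)
    (ψ : EuclideanSpace ℝ (Fin n) → EuclideanSpace ℝ (Fin m))
    (hψ : ContDiff ℝ 2 ψ)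
    (hper : ∀ (x : EuclideanSpace ℝ (Fin n)) (k : Fin n → ℤ),
      ψ (x + (WithLp.equiv 2 (Fin n → ℝ)).symm (fun i => (k i : ℝ))) = ψ x)
    (heq : ∀ x : EuclideanSpace ℝ (Fin n),
      -euclideanLaplacian ψ x + (lam / (4 * ((n : ℝ) - 2)) * ‖ψ x‖ ^ 2) • ψ x
        = (lam ^ 2) • ψ x) :
    ∀ x : EuclideanSpace ℝ (Fin n), ‖ψ x‖ ^ 2 ≤ 4 * ((n : ℝ) - 2) * lam := by
  obtain ⟨x₀, hx₀⟩ := exists_forall_le_of_intPeriodic (f := fun x => ‖ψ x‖ ^ 2)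
    (hψ.continuous.norm.pow 2) fun x k => by rw [hper]
  have hlap : ⟪ψ x₀, euclideanLaplacian ψ x₀⟫ ≤ 0 :=
    IsLocalMax.inner_euclideanLaplacian_nonpos (Filter.Eventually.of_forall hx₀) hψ
  have hL : euclideanLaplacian ψ x₀
      = (lam / (4 * ((n : ℝ) - 2)) * ‖ψ x₀‖ ^ 2) • ψ x₀ - (lam ^ 2) • ψ x₀ := by
    rw [← heq x₀]
    abel
  rw [hL, inner_sub_right, real_inner_smul_right, real_inner_smul_right,
    real_inner_self_eq_norm_sq, ← sub_mul] at hlap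
  have hdim : (0 : ℝ) < 4 * ((n : ℝ) - 2) := by
    have : (3 : ℝ) ≤ n := by exact_mod_cast hn
    linarith
  have hbound : ‖ψ x₀‖ ^ 2 ≤ 4 * ((n : ℝ) - 2) * lam := by
    by_contra! hgt
    have hpos : 0 < ‖ψ x₀‖ ^ 2 := lt_trans (by positivity) hgt
    have hcoeff : lam ^ 2 < lam / (4 * ((n : ℝ) - 2)) * ‖ψ x₀‖ ^ 2 := by
      rw [div_mul_eq_mul_div, lt_div_iff₀ hdim]
      nlinarith
    exact hlap.not_gt (mul_pos (sub_pos.2 hcoeff) hpos)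
  exact fun x => (hx₀ x).trans hbound

/-- a `ℤⁿ`-periodic `C²` solution of the Einstein–Dirac-type equation
`−Δψ + (λ/(4(n−2)))‖ψ‖²ψ = λ²ψ` satisfies `‖ψ‖² ≤ 4(n−2)λ`. -/
theorem periodic_einstein_spinor_sup_bound
    (n m : ℕ) (hn : 3 ≤ n) (hm : 1 ≤ m) (lam : ℝ) (hlam : 0 < lam)
    (ψ : EuclideanSpace ℝ (Fin n) → EuclideanSpace ℝ (Fin m))
    (hψ : ContDiff ℝ 2 ψ)
    (hper : ∀ (x : EuclideanSpace ℝ (Fin n)) (k : Fin n → ℤ),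
      ψ (x + (WithLp.equiv 2 (Fin n → ℝ)).symm (fun i => (k i : ℝ))) = ψ x)
    (heq : ∀ x : EuclideanSpace ℝ (Fin n),
      -euclideanLaplacian ψ x + (lam / (4 * ((n : ℝ) - 2)) * ‖ψ x‖ ^ 2) • ψ x
        = (lam ^ 2) • ψ x) :
    ∀ x : EuclideanSpace ℝ (Fin n), ‖ψ x‖ ^ 2 ≤ 4 * ((n : ℝ) - 2) * lam :=
  periodic_einstein_spinor_sup_bound_general n m hn lam hlam ψ hψ hper heq
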